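/- Let r ≥ 2 and n ≥ 1 be integers, R a commutative ℚ-algebra, ψ : Fin n → R, and c : (Fin n → ℤ) → R a function satisfying the abstract descent relation, and let I : R →ₗ[ℚ] ℚ be a ℚ-linear functional (modeling integration over the moduli space of r-spin curves). For any a : Fin n → ℕ and any m : Fin n → ℤ with 0 ≤ m i ≤ r - 1 for all i, one has I(c (r·a + m)) = (∏_{i} (-1/r)^{a i} · [r(a i - 1) + m i + 1]_r) · I(c m · ∏_{i} (ψ i)^{a i}). Consequently, the correlators ⟨τ̃_{m̃_1}⋯τ̃_{m̃_n}⟩ defined without ψ classes from the extended classes cᵛ(m̃) agree with the gravitational-descendant correlators ⟨τ_{a_1,m_1}⋯τ_{a_n,m_n}⟩ up to the explicit factor ∏_i (-1)^{a_i} r^{-a_i} [r(a_i-1)+m_i+1]_r; this is the coefficientwise form of the paper's Corollary identifying the potential χ̃(t̃) with the large phase space potential Φ(t) under the variable identification t̃^{ar+m} = ((-1)^a r^a / [r(a-1)+m+1]_r)·t_a^m. -/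
import Mathlib


/-- A tuple `m : Fin n → ℤ` is *admissible* if either all of its entries are
nonnegative, or there is an index `j` with `m j = -1` and all other entries
nonnegative. -/
def Admissible {n : ℕ} (m : Fin n → ℤ) : Prop :=
  (∀ j, 0 ≤ m j) ∨ (∃ j, m j = -1 ∧ ∀ k, k ≠ j → 0 ≤ m k)

/-- The abstract descent relation modeling the Descent Axiom
`cᵛ(m + r δ_i) = -ψ̃_i(m) · cᵛ(m)` together with
`ψ̃_i(m) = ((m_i + 1)/r) · ψ_i`. -/
def DescentRelation {n : ℕ} (r : ℤ) {R : Type*} [CommRing R] [Algebra ℚ R]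
    (ψ : Fin n → R) (c : (Fin n → ℤ) → R) : Prop :=
  ∀ m : Fin n → ℤ, Admissible m → ∀ i : Fin n,
    c (m + r • Pi.single i 1) = (-(((m i : ℚ) + 1) / (r : ℚ))) • (ψ i * c m)

/-- The rational number `[r(a-1)+m+1]_r := ∏_{j=1}^{a} (r(a-j) + m + 1)`,
which equals `1` when `a = 0`. -/
def bracket (r : ℤ) (a : ℕ) (m : ℤ) : ℚ :=
  ∏ j ∈ Finset.range a, ((r : ℚ) * ((a : ℚ) - 1 - (j : ℚ)) + (m : ℚ) + 1)

lemma bracket_succ (r : ℤ) (t : ℕ) (m : ℤ) :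
    bracket r (t + 1) m = ((r : ℚ) * (t : ℚ) + (m : ℚ) + 1) * bracket r t m := by
  unfold bracket
  rw [Finset.prod_range_succ', mul_comm]
  congr 1
  · push_cast; ring
  · apply Finset.prod_congr rfl
    intro j hj; push_cast; ring

lemma key {n : ℕ} (r : ℤ) (hr : 2 ≤ r) {R : Type*} [CommRing R] [Algebra ℚ R]
    (ψ : Fin n → R) (c : (Fin n → ℤ) → R) (hc : DescentRelation r ψ c)
    (m : Fin n → ℤ) (hm : ∀ i, 0 ≤ m i) :
    ∀ (N : ℕ) (a : Fin n → ℕ), (∑ i, a i) = N →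
      c (fun i => r * (a i : ℤ) + m i) =
        (∏ i, (-1 / (r : ℚ)) ^ (a i) * bracket r (a i) (m i)) • (c m * ∏ i, ψ i ^ (a i)) := by
  intro N
  induction N with
  | zero =>
    intro a ha
    have h0 : ∀ i, a i = 0 := by
      intro i
      have := Finset.sum_eq_zero_iff.mp ha
      exact this i (Finset.mem_univ i)
    simp [h0, bracket]
  | succ N ih =>
    intro a ha
    have hex : ∃ i, a i ≠ 0 := by
      by_contra h; push_neg at h; simp [h] at ha
    obtain ⟨i, hi⟩ := hex
    have hi1 : 1 ≤ a i := Nat.one_le_iff_ne_zero.mpr hi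
    set b := Function.update a i (a i - 1) with hb
    have hbN : ∑ j, b j = N := by
      have h1 : ∑ j, b j = (a i - 1) + ∑ j ∈ Finset.univ \ {i}, a j := by
        rw [hb]; exact Finset.sum_update_of_mem (Finset.mem_univ i) a (a i - 1)
      have h2 : ∑ j, a j = a i + ∑ j ∈ Finset.univ \ {i}, a j := by
        rw [← Finset.erase_eq]; exact (Finset.add_sum_erase _ _ (Finset.mem_univ i)).symm
      omega
    have hcast : ((a i - 1 : ℕ) : ℤ) = (a i : ℤ) - 1 := by
      rw [Nat.cast_sub hi1]; norm_num
    have harg : (fun j => r * (a j : ℤ) + m j)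
        = (fun j => r * (b j : ℤ) + m j) + r • Pi.single i 1 := by
      funext j
      by_cases hj : j = i
      · subst hj
        simp only [hb, Pi.add_apply, Pi.smul_apply, Function.update_self,
          Pi.single_eq_same, smul_eq_mul, hcast]
        ring
      · simp [hb, Function.update_of_ne hj, Pi.single_eq_of_ne hj]
    have hadm : Admissible (fun j => r * (b j : ℤ) + m j) :=
      Or.inl fun j => add_nonneg (mul_nonneg (by omega) (Int.natCast_nonneg _)) (hm j)
    have step := hc _ hadm i
    have hbi : b i = a i - 1 := by simp [hb]
    rw [harg, step, ih b hbN]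
    have hψ : ψ i * ∏ j, ψ j ^ b j = ∏ j, ψ j ^ a j := by
      have hfun : (fun j => ψ j ^ b j)
          = Function.update (fun j => ψ j ^ a j) i (ψ i ^ (a i - 1)) := by
        funext j
        by_cases hj : j = i
        · subst hj; simp [hb]
        · simp [hb, Function.update_of_ne hj]
      rw [hfun, Finset.prod_update_of_mem (Finset.mem_univ i),
        ← Finset.mul_prod_erase Finset.univ (fun j => ψ j ^ a j) (Finset.mem_univ i),
        Finset.erase_eq, ← mul_assoc, ← pow_succ', Nat.sub_add_cancel hi1]
    have hsc : (∏ j, (-1 / (r : ℚ)) ^ (a j) * bracket r (a j) (m j))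
        = (-((((r * (b i : ℤ) + m i : ℤ) : ℚ) + 1) / (r : ℚ)))
          * ∏ j, (-1 / (r : ℚ)) ^ (b j) * bracket r (b j) (m j) := by
      have hfun : (fun j => (-1 / (r : ℚ)) ^ (b j) * bracket r (b j) (m j))
          = Function.update (fun j => (-1 / (r : ℚ)) ^ (a j) * bracket r (a j) (m j)) i
              ((-1 / (r : ℚ)) ^ (a i - 1) * bracket r (a i - 1) (m i)) := by
        funext j
        by_cases hj : j = i
        · subst hj; simp [hb]
        · simp [hb, Function.update_of_ne hj]
      rw [hfun, Finset.prod_update_of_mem (Finset.mem_univ i),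
        ← Finset.mul_prod_erase Finset.univ
          (fun j => (-1 / (r : ℚ)) ^ (a j) * bracket r (a j) (m j)) (Finset.mem_univ i),
        Finset.erase_eq, ← mul_assoc]
      congr 1
      obtain ⟨t, ht⟩ : ∃ t, a i = t + 1 := ⟨a i - 1, by omega⟩
      have ht' : a i - 1 = t := by omega
      rw [hbi, ht', ht, bracket_succ, pow_succ']
      push_cast
      ring
    rw [hsc, mul_smul_comm, smul_smul, ← hψ]
    congr 1
    ring

/-- Coefficientwise identification of the potentials `χ̃(t̃)` and `Φ(t)`:
for a ℚ-linear functional `I` (integration over moduli space), the correlators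
without ψ classes of the extended classes agree with the gravitational
descendants up to the explicit factor `∏ i (-1/r)^(a i) · [r(a i -1)+m i+1]_r`. -/
theorem correlator_identification {n : ℕ} (hn : 1 ≤ n) (r : ℤ) (hr : 2 ≤ r)
    {R : Type*} [CommRing R] [Algebra ℚ R]
    (ψ : Fin n → R) (c : (Fin n → ℤ) → R)
    (hc : DescentRelation r ψ c)
    (I : R →ₗ[ℚ] ℚ)
    (a : Fin n → ℕ) (m : Fin n → ℤ)
    (hm : ∀ i, 0 ≤ m i ∧ m i ≤ r - 1) :
    I (c (fun i => r * (a i : ℤ) + m i)) =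
      (∏ i, (-1 / (r : ℚ)) ^ (a i) * bracket r (a i) (m i)) *
        I (c m * ∏ i, ψ i ^ (a i)) := by
  have := key r hr ψ c hc m (fun i => (hm i).1) (∑ i, a i) a rfl
  rw [this, map_smul, smul_eq_mul]
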